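/- arXiv:1809.03461 — 7 statements merged into one kernel-verified Lean document; each statement's English description precedes it below -/
import Mathlib

section
/- Let $K \in \mathbb{R}^{Q \times Q}$ be a symmetric positive definite matrix with eigenvalues $\lambda_1 \ge \lambda_2 \ge \cdots \ge \lambda_Q > 0$. Fix $N \le Q$ indices $i_1, \dots, i_N \in \{1,\dots,Q\}$, let $C \in \mathbb{R}^{N \times N}$ be the submatrix with entries $C_{mn} = K_{i_m i_n}$, and for each $j \in \{1,\dots,Q\}$ let $c_j \in \mathbb{R}^N$ have entries $(c_j)_m = K_{i_m j}$. Assume $C$ is invertible. Then $\sum_{j=1}^Q (K_{jj} - c_j^T C^{-1} c_j) \ge \sum_{i=N+1}^Q \lambda_i$. -/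
open Matrix Finset


lemma lc_card_filter {Q N : ℕ} (hNQ : N ≤ Q) :
    ((univ : Finset (Fin Q)).filter fun i : Fin Q => (i:ℕ) < N).card = N := by
  rw [Finset.card_filter, Fin.sum_univ_eq_sum_range (fun k => if k < N then 1 else 0)]
  have : ∀ i ∈ Finset.range Q, (if i < N then 1 else 0) = if i ∈ Finset.range N then 1 else 0 := by
    intro i _; simp
  rw [Finset.sum_congr rfl this, Finset.sum_ite_mem,
    Finset.inter_eq_right.mpr (Finset.range_subset_range.mpr hNQ)]
  simp

lemma lc_key {Q N : ℕ} (hNQ : N ≤ Q) (lam p : Fin Q → ℝ)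
    (hlam_pos : ∀ i, 0 < lam i)
    (hmono : ∀ i j : Fin Q, i ≤ j → lam j ≤ lam i)
    (hp0 : ∀ i, 0 ≤ p i) (hp1 : ∀ i, p i ≤ 1)
    (hsum : ∑ i, p i = (N : ℝ)) :
    ∑ i, lam i * p i ≤ ∑ i ∈ univ.filter (fun i : Fin Q => (i:ℕ) < N), lam i := by
  rcases eq_or_lt_of_le hNQ with hEQ | hlt
  · have hfil : (univ.filter fun i : Fin Q => (i:ℕ) < N) = univ := by
      apply Finset.filter_true_of_mem; intro i _; exact hEQ ▸ i.isLt
    rw [hfil]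
    apply Finset.sum_le_sum
    intro i _
    have h1 := hp1 i; have h2 := (hlam_pos i).le
    nlinarith
  · set t := lam ⟨N, hlt⟩ with ht
    have hχsum : ∑ i : Fin Q, (if (i:ℕ) < N then (1:ℝ) else 0) = (N : ℝ) := by
      rw [Finset.sum_ite, Finset.sum_const, Finset.sum_const]
      simp [lc_card_filter hNQ]
    have hterm : ∀ i : Fin Q, 0 ≤ ((if (i:ℕ) < N then (1:ℝ) else 0) - p i) * (lam i - t) := by
      intro i
      by_cases h : (i:ℕ) < N
      · have hle : lam ⟨N, hlt⟩ ≤ lam i := hmono i ⟨N, hlt⟩ (by simp [Fin.le_def]; omega)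
        simp only [h, if_pos]
        have := hp1 i
        nlinarith
      · have hle : lam i ≤ lam ⟨N, hlt⟩ := hmono ⟨N, hlt⟩ i (by simp [Fin.le_def]; omega)
        simp only [h, if_neg, not_false_iff]
        have := hp0 i
        nlinarith
    have hsum2 : 0 ≤ ∑ i : Fin Q, ((if (i:ℕ) < N then (1:ℝ) else 0) - p i) * (lam i - t) :=
      Finset.sum_nonneg fun i _ => hterm i
    have hexp : ∑ i : Fin Q, ((if (i:ℕ) < N then (1:ℝ) else 0) - p i) * (lam i - t)
        = (∑ i : Fin Q, (if (i:ℕ) < N then (1:ℝ) else 0) * lam i) - (∑ i, lam i * p i)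
          - t * ((∑ i : Fin Q, (if (i:ℕ) < N then (1:ℝ) else 0)) - ∑ i, p i) := by
    

      have h1 : ∀ i : Fin Q, ((if (i:ℕ) < N then (1:ℝ) else 0) - p i) * (lam i - t)
          = (if (i:ℕ) < N then (1:ℝ) else 0) * lam i - lam i * p i
            - t * (if (i:ℕ) < N then (1:ℝ) else 0) + t * p i := fun i => by ring
      rw [Finset.sum_congr rfl fun i _ => h1 i]
      rw [Finset.sum_add_distrib, Finset.sum_sub_distrib, Finset.sum_sub_distrib,
        ← Finset.mul_sum, ← Finset.mul_sum]
      ring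
    have hfil : ∑ i ∈ univ.filter (fun i : Fin Q => (i:ℕ) < N), lam i
        = ∑ i : Fin Q, (if (i:ℕ) < N then (1:ℝ) else 0) * lam i := by
      rw [Finset.sum_filter]
      exact Finset.sum_congr rfl fun i _ => by by_cases h : (i:ℕ) < N <;> simp [h]
    rw [hfil]
    rw [hexp, hχsum, hsum] at hsum2
    linarith


/-- Learning-curve lower bound: total predictive variance of Kriging with `N`
noiseless observations is at least the sum of the `Q - N` smallest eigenvalues. -/
theorem learning_curve_lower_bound {Q N : ℕ} (hNQ : N ≤ Q)
    (K : Matrix (Fin Q) (Fin Q) ℝ) (hK : K.PosDef)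
    (V : Matrix (Fin Q) (Fin Q) ℝ) (hV : Vᵀ * V = 1)
    (lam : Fin Q → ℝ) (hlam_pos : ∀ i, 0 < lam i)
    (hlam_mono : ∀ i j : Fin Q, i ≤ j → lam j ≤ lam i)
    (hdecomp : K = V * Matrix.diagonal lam * Vᵀ)
    (idx : Fin N → Fin Q)
    (C : Matrix (Fin N) (Fin N) ℝ)
    (hC : C = Matrix.of fun m n => K (idx m) (idx n))
    (hCinv : IsUnit C.det)
    (c : Fin Q → Fin N → ℝ) (hc : ∀ j m, c j m = K (idx m) j) :
    ∑ i ∈ Finset.univ.filter (fun i : Fin Q => N ≤ (i : ℕ)), lam i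
      ≤ ∑ j : Fin Q, (K j j - c j ⬝ᵥ C⁻¹ *ᵥ c j) := by
  -- square root factor
  set s : Fin Q → ℝ := fun i => Real.sqrt (lam i) with hs
  set A : Matrix (Fin Q) (Fin Q) ℝ := V * Matrix.diagonal s with hA
  set E : Matrix (Fin Q) (Fin N) ℝ :=
    Matrix.of (fun j m => if j = idx m then (1:ℝ) else 0) with hE
  have hss : ∀ i, s i * s i = lam i := fun i => Real.mul_self_sqrt (hlam_pos i).le
  have hdd : Matrix.diagonal s * Matrix.diagonal s = Matrix.diagonal lam := by
    rw [Matrix.diagonal_mul_diagonal]; exact congrArg _ (funext hss)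
  have hAAt : A * Aᵀ = K := by
    rw [hA, Matrix.transpose_mul, Matrix.diagonal_transpose, hdecomp]
    rw [Matrix.mul_assoc, ← Matrix.mul_assoc (Matrix.diagonal s), hdd, Matrix.mul_assoc]
  have hAtA : Aᵀ * A = Matrix.diagonal lam := by
    rw [hA, Matrix.transpose_mul, Matrix.diagonal_transpose, Matrix.mul_assoc,
      ← Matrix.mul_assoc Vᵀ, hV, Matrix.one_mul, hdd]
  have hKsymm : Kᵀ = K := by
    rw [hdecomp]; simp [Matrix.transpose_mul, Matrix.diagonal_transpose, Matrix.mul_assoc]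
  -- K * E picks columns
  have hKE : ∀ (M : Matrix (Fin Q) (Fin Q) ℝ) (j : Fin Q) (m : Fin N),
      (M * E) j m = M j (idx m) := by
    intro M j m
    simp only [Matrix.mul_apply, hE, Matrix.of_apply, mul_ite, mul_one, mul_zero]
    exact Finset.sum_ite_eq' _ _ _ |>.trans (by simp)
  have hEt : ∀ (M : Matrix (Fin Q) (Fin N) ℝ) (m n : Fin N),
      (Eᵀ * M) m n = M (idx m) n := by
    intro M m n
    simp only [Matrix.mul_apply, Matrix.transpose_apply, hE, Matrix.of_apply, ite_mul, one_mul,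
      zero_mul]
    exact Finset.sum_ite_eq' _ _ _ |>.trans (by simp)
  set W : Matrix (Fin Q) (Fin N) ℝ := Aᵀ * E with hW
  have hWtW : Wᵀ * W = C := by
    rw [hW, Matrix.transpose_mul, Matrix.transpose_transpose, Matrix.mul_assoc,
      ← Matrix.mul_assoc A, hAAt]
    ext m n
    rw [hEt (K * E) m n, hKE K (idx m) n, hC]; rfl
  set P : Matrix (Fin Q) (Fin Q) ℝ := W * C⁻¹ * Wᵀ with hP
  have hCsymm : Cᵀ = C := by rw [← hWtW]; simp [Matrix.transpose_mul]
  have hCisymm : (C⁻¹)ᵀ = C⁻¹ := by rw [Matrix.transpose_nonsing_inv, hCsymm]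
  have hPsymm : Pᵀ = P := by
    rw [hP]; simp [Matrix.transpose_mul, hCisymm, Matrix.mul_assoc]
  have hPidem : P * P = P := by
    have h1 : P * P = W * (C⁻¹ * (Wᵀ * W * (C⁻¹ * Wᵀ))) := by
      rw [hP]; simp only [Matrix.mul_assoc]
    rw [h1, hWtW, ← Matrix.mul_assoc C⁻¹ C, Matrix.nonsing_inv_mul C hCinv, Matrix.one_mul,
      hP, Matrix.mul_assoc W C⁻¹ Wᵀ]
  have hPentry : ∀ i, P i i = ∑ k, (P k i) ^ 2 := by
    intro i
    calc P i i = (Pᵀ * P) i i := by rw [hPsymm, hPidem]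
      _ = ∑ k, (P k i) ^ 2 := by
          simp [Matrix.mul_apply, Matrix.transpose_apply, sq]
  have hp0 : ∀ i, 0 ≤ P i i := fun i => (hPentry i) ▸ Finset.sum_nonneg fun k _ => sq_nonneg _
  have hp1 : ∀ i, P i i ≤ 1 := by
    intro i
    have h1 : P i i ^ 2 ≤ P i i := by
      conv_rhs => rw [hPentry i]
      exact Finset.single_le_sum (f := fun k => (P k i)^2) (fun k _ => sq_nonneg _)
        (Finset.mem_univ i)
    nlinarith [hp0 i]
  have hEt2 : ∀ (m : Fin N) (j : Fin Q), (Eᵀ * K) m j = K (idx m) j := by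
    intro m j
    simp only [Matrix.mul_apply, Matrix.transpose_apply, hE, Matrix.of_apply, ite_mul, one_mul,
      zero_mul]
    exact Finset.sum_ite_eq' _ _ _ |>.trans (by simp)
  have hKs : ∀ a b, K a b = K b a := by
    intro a b; conv_lhs => rw [← hKsymm, Matrix.transpose_apply]
  -- trace of P is N
  have htrP : ∑ i, P i i = (N : ℝ) := by
    have h2 : Matrix.trace P = Matrix.trace (1 : Matrix (Fin N) (Fin N) ℝ) := by
      rw [hP, Matrix.trace_mul_comm (W * C⁻¹) Wᵀ, ← Matrix.mul_assoc, hWtW,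
        Matrix.mul_nonsing_inv C hCinv]
    simpa [Matrix.trace, Matrix.diag] using h2
  -- trace of K is sum of lam
  have htrK : ∑ i, K i i = ∑ i, lam i := by
    have h2 : Matrix.trace K = Matrix.trace (Matrix.diagonal lam) := by
      rw [hdecomp, Matrix.trace_mul_comm (V * Matrix.diagonal lam) Vᵀ, ← Matrix.mul_assoc, hV,
        Matrix.one_mul]
    simpa [Matrix.trace, Matrix.diag, Matrix.trace_diagonal] using h2
  set R : Matrix (Fin Q) (Fin Q) ℝ := (K * E) * C⁻¹ * (Eᵀ * K) with hR
  have hRAP : R = A * P * Aᵀ := by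
    rw [hR, hP, hW, ← hAAt]
    simp only [Matrix.transpose_mul, Matrix.transpose_transpose, Matrix.mul_assoc]
  have htrR : ∑ j, R j j = ∑ i, lam i * P i i := by
    have h2 : Matrix.trace R = Matrix.trace (Matrix.diagonal lam * P) := by
      rw [hRAP, Matrix.trace_mul_comm (A * P) Aᵀ, ← Matrix.mul_assoc, hAtA]
    simpa [Matrix.trace, Matrix.diag, Matrix.diagonal_mul] using h2
  have hcR : ∀ j, c j ⬝ᵥ C⁻¹ *ᵥ c j = R j j := by
    intro j
    have hRjj : R j j = ∑ m, (∑ n, c j n * C⁻¹ n m) * c j m := by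
      rw [hR, Matrix.mul_apply]
      apply Finset.sum_congr rfl; intro m _
      rw [hEt2 m j, ← hc]
      congr 1
      rw [Matrix.mul_apply]
      apply Finset.sum_congr rfl; intro n _
      rw [hKE K j n, hKs, ← hc]
    calc c j ⬝ᵥ C⁻¹ *ᵥ c j = ∑ m, ∑ n, c j m * (C⁻¹ m n * c j n) := by
          simp [Matrix.mulVec, dotProduct, Finset.mul_sum]
      _ = ∑ n, ∑ m, c j m * (C⁻¹ m n * c j n) := Finset.sum_comm
      _ = ∑ m, (∑ n, c j n * C⁻¹ n m) * c j m := by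
          simp only [Finset.sum_mul]
          apply Finset.sum_congr rfl; intro m _
          apply Finset.sum_congr rfl; intro n _
          ring
      _ = R j j := hRjj.symm
  have hkey := lc_key hNQ lam (fun i => P i i) hlam_pos hlam_mono hp0 hp1 htrP
  have hsplit : (∑ i ∈ univ.filter (fun i : Fin Q => (i:ℕ) < N), lam i)
      + ∑ i ∈ univ.filter (fun i : Fin Q => ¬ (i:ℕ) < N), lam i = ∑ i, lam i :=
    Finset.sum_filter_add_sum_filter_not univ _ lam
  have hfilteq : (univ.filter (fun i : Fin Q => N ≤ (i:ℕ)))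
      = univ.filter (fun i : Fin Q => ¬ (i:ℕ) < N) := by
    apply Finset.filter_congr; intro i _; simp [not_lt]
  have hRHS : ∑ j : Fin Q, (K j j - c j ⬝ᵥ C⁻¹ *ᵥ c j)
      = ∑ i, lam i - ∑ i, lam i * P i i := by
    rw [Finset.sum_sub_distrib, htrK, ← htrR]
    congr 1
    exact Finset.sum_congr rfl fun j _ => hcR j
  rw [hRHS, hfilteq]
  linarith
end

section
/- Let $K \in \mathbb{R}^{Q\times Q}$ be symmetric positive definite with inner product $\langle x,y\rangle_K = x^T K^{-1} y$. Under the assumptions of the projection lemma, the predictive variance at point $j$ satisfies $K_{jj} - c_j^T C^{-1} c_j = (K_j)_j - (\mathcal{P}_N K_j)_j$, i.e., it equals the $j$-th coordinate of the residual of the projection of the $j$-th column $K_j$ of $K$ onto the span of the observed columns. -/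
open Matrix Finset

/-- The predictive variance at point `j` equals the `j`-th coordinate of the residual
of the `⟪·,·⟫_K`-orthogonal projection of the `j`-th column of `K` onto the span of the
observed columns. -/
theorem predictive_variance_eq_residual {Q N : ℕ}
    (K : Matrix (Fin Q) (Fin Q) ℝ) (hK : K.PosDef)
    (idx : Fin N → Fin Q)
    (C : Matrix (Fin N) (Fin N) ℝ)
    (hC : C = Matrix.of fun m n => K (idx m) (idx n))
    (hCinv : IsUnit C.det)
    (j : Fin Q)
    (cj : Fin N → ℝ) (hcj : ∀ m, cj m = K (idx m) j)
    (p : Fin Q → ℝ)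
    (hmem : p ∈ Submodule.span ℝ (Set.range fun n : Fin N => (fun q => K q (idx n))))
    (horth : ∀ n : Fin N,
      (fun q => K q j - p q) ⬝ᵥ (K⁻¹ *ᵥ fun q => K q (idx n)) = 0) :
    K j j - cj ⬝ᵥ C⁻¹ *ᵥ cj = K j j - p j := by
  have hKdet : IsUnit K.det := hK.det_pos.ne'.isUnit
  -- columns of K are K *ᵥ single
  have hcol : ∀ n : Fin N, (fun q => K q (idx n)) = K *ᵥ Pi.single (idx n) 1 := by
    intro n
    funext q
    simp [Matrix.mulVec_single]
  -- orthogonality gives p (idx n) = K (idx n) j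
  have hval : ∀ n : Fin N, p (idx n) = K (idx n) j := by
    intro n
    have h := horth n
    rw [hcol n, Matrix.mulVec_mulVec, Matrix.nonsing_inv_mul K hKdet,
      Matrix.one_mulVec] at h
    have h' : K (idx n) j - p (idx n) = 0 := by
      simpa [dotProduct, Pi.single_apply] using h
    linarith
  -- coefficients
  obtain ⟨a, ha⟩ := (Finsupp.mem_span_range_iff_exists_finsupp).1 hmem
  have hpa : ∀ q, p q = ∑ n, a n * K q (idx n) := by
    intro q
    rw [← ha]
    simp [Finsupp.sum_fintype, mul_comm]
  -- C *ᵥ a = cj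
  have hCa : C *ᵥ (fun n => a n) = cj := by
    funext m
    have := hpa (idx m)
    rw [hval m] at this
    simp only [Matrix.mulVec, dotProduct, hC, Matrix.of_apply, hcj m]
    rw [this]
    exact Finset.sum_congr rfl fun n _ => mul_comm _ _
  have haeq : (fun n => a n) = C⁻¹ *ᵥ cj := by
    rw [← hCa, Matrix.mulVec_mulVec, Matrix.nonsing_inv_mul C hCinv, Matrix.one_mulVec]
  have hsymm : ∀ i i' : Fin Q, K i i' = K i' i := by
    intro i i'
    have := hK.isHermitian.apply i' i
    simpa using this
  have : cj ⬝ᵥ C⁻¹ *ᵥ cj = p j := by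
    rw [← haeq, hpa j, dotProduct]
    refine Finset.sum_congr rfl fun n _ => ?_
    rw [hcj n, hsymm j (idx n)]
    ring
  rw [this]
end

section
/- Let $\mathcal{L}$ be a bounded linear operator on a normed space of functions. Let $Y^1,\dots,Y^M$ ($M \ge 2$) be functions, $\mu_{MC} = \frac{1}{M}\sum_m Y^m$, and fix a point $x^{(i)}$. Suppose $\|\mathcal{L} Y^m - g_m\| \le \epsilon$ for all $m$, and let $\bar g = \frac{1}{M}\sum_m g_m$, $\sigma_g = (\frac{1}{M-1}\sum_m \|g_m - \bar g\|^2)^{1/2}$, and $\sigma_i = (\frac{1}{M-1}\sum_m |Y^m(x^{(i)}) - \mu_{MC}(x^{(i)})|^2)^{1/2}$. Then the sample covariance function $k_{MC}(\cdot, x^{(i)}) = \frac{1}{M-1}\sum_m (Y^m(x^{(i)}) - \mu_{MC}(x^{(i)}))(Y^m - \mu_{MC})$ satisfies $\|\mathcal{L} k_{MC}(\cdot, x^{(i)})\| \le \big(2\epsilon\sqrt{M/(M-1)} + \sigma_g\big)\,\sigma_i$. -/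
open Finset

/-- Bound on the constraint violation of the sample covariance function
`k_MC(·, x⁽ⁱ⁾) = (M-1)⁻¹ ∑ₘ (Yᵐ(x⁽ⁱ⁾) - μ_MC(x⁽ⁱ⁾)) (Yᵐ - μ_MC)`, where `t m`
denotes the point value `Yᵐ(x⁽ⁱ⁾)`. -/
theorem sample_covariance_constraint_bound {V W : Type*}
    [NormedAddCommGroup V] [NormedSpace ℝ V]
    [NormedAddCommGroup W] [NormedSpace ℝ W]
    (L : V →L[ℝ] W) {M : ℕ} (hM : 2 ≤ M)
    (Y : Fin M → V) (g : Fin M → W) (ε : ℝ)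
    (h : ∀ m, ‖L (Y m) - g m‖ ≤ ε)
    (t : Fin M → ℝ)
    (μ : V) (hμ : μ = (M : ℝ)⁻¹ • ∑ m, Y m)
    (tbar : ℝ) (htbar : tbar = (M : ℝ)⁻¹ * ∑ m, t m)
    (gbar : W) (hgbar : gbar = (M : ℝ)⁻¹ • ∑ m, g m)
    (σg : ℝ) (hσg : σg = Real.sqrt (((M : ℝ) - 1)⁻¹ * ∑ m, ‖g m - gbar‖ ^ 2))
    (σi : ℝ) (hσi : σi = Real.sqrt (((M : ℝ) - 1)⁻¹ * ∑ m, (t m - tbar) ^ 2))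
    (k : V) (hk : k = ((M : ℝ) - 1)⁻¹ • ∑ m, (t m - tbar) • (Y m - μ)) :
    ‖L k‖ ≤ (2 * ε * Real.sqrt ((M : ℝ) / ((M : ℝ) - 1)) + σg) * σi := by
  have hM2 : (2:ℝ) ≤ (M:ℝ) := by exact_mod_cast hM
  have hMpos : (0:ℝ) < (M:ℝ) - 1 := by linarith
  have hMne : (M:ℝ) ≠ 0 := by positivity
  have hε : 0 ≤ ε := le_trans (norm_nonneg _) (h ⟨0, by omega⟩)
  set c : ℝ := ((M:ℝ) - 1)⁻¹ with hc
  have hcpos : 0 < c := inv_pos.mpr hMpos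
  have hsum0 : ∑ m, (t m - tbar) = 0 := by
    rw [Finset.sum_sub_distrib, htbar, Finset.sum_const, Finset.card_univ,
      Fintype.card_fin, nsmul_eq_mul]
    field_simp
    ring
  -- key decomposition
  have key : L k = c • ((∑ m, (t m - tbar) • (L (Y m) - g m)) +
      ∑ m, (t m - tbar) • (g m - gbar)) := by
    rw [hk, map_smul, map_sum]
    congr 1
    have step : ∀ m : Fin M, L ((t m - tbar) • (Y m - μ)) =
        (t m - tbar) • (L (Y m) - g m) + (t m - tbar) • (g m - gbar)
          + (t m - tbar) • (gbar - L μ) := by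
      intro m
      rw [map_smul, map_sub, ← smul_add, ← smul_add]
      congr 1
      abel
    rw [Finset.sum_congr rfl fun m _ => step m]
    simp only [Finset.sum_add_distrib, ← Finset.sum_smul, hsum0, zero_smul, add_zero]
  set St : ℝ := ∑ m, (t m - tbar) ^ 2 with hSt
  set Sg : ℝ := ∑ m, ‖g m - gbar‖ ^ 2 with hSg
  have hStnn : 0 ≤ St := Finset.sum_nonneg fun m _ => sq_nonneg _
  have hSgnn : 0 ≤ Sg := Finset.sum_nonneg fun m _ => sq_nonneg _
  -- bound on A
  have hA : ‖∑ m, (t m - tbar) • (L (Y m) - g m)‖ ≤ ε * (Real.sqrt (M) * Real.sqrt St) := by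
    calc ‖∑ m, (t m - tbar) • (L (Y m) - g m)‖
        ≤ ∑ m, ‖(t m - tbar) • (L (Y m) - g m)‖ := norm_sum_le _ _
      _ ≤ ∑ m, |t m - tbar| * ε := by
          refine Finset.sum_le_sum fun m _ => ?_
          rw [norm_smul, Real.norm_eq_abs]
          exact mul_le_mul_of_nonneg_left (h m) (abs_nonneg _)
      _ = ε * ∑ m, |t m - tbar| := by rw [Finset.mul_sum]; congr 1; ext m; ring
      _ ≤ ε * (Real.sqrt (M) * Real.sqrt St) := by
          refine mul_le_mul_of_nonneg_left ?_ hε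
          have h1 : (∑ m : Fin M, |t m - tbar| * 1) ^ 2 ≤
              (∑ m : Fin M, |t m - tbar| ^ 2) * ∑ m : Fin M, (1:ℝ) ^ 2 :=
            Finset.sum_mul_sq_le_sq_mul_sq _ _ _
          simp only [mul_one, one_pow, Finset.sum_const, Finset.card_univ,
            Fintype.card_fin, nsmul_eq_mul, sq_abs] at h1
          have h2 : ∑ m : Fin M, |t m - tbar| ≤ Real.sqrt (St * M) := by
            rw [← Real.sqrt_sq (Finset.sum_nonneg fun m _ => abs_nonneg _)]
            exact Real.sqrt_le_sqrt (by linarith [h1])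
          calc ∑ m : Fin M, |t m - tbar| ≤ Real.sqrt (St * M) := h2
            _ = Real.sqrt M * Real.sqrt St := by
                rw [Real.sqrt_mul hStnn, mul_comm]
  -- bound on B
  have hB : ‖∑ m, (t m - tbar) • (g m - gbar)‖ ≤ Real.sqrt St * Real.sqrt Sg := by
    calc ‖∑ m, (t m - tbar) • (g m - gbar)‖
        ≤ ∑ m, ‖(t m - tbar) • (g m - gbar)‖ := norm_sum_le _ _
      _ = ∑ m, |t m - tbar| * ‖g m - gbar‖ := by
          refine Finset.sum_congr rfl fun m _ => ?_
          rw [norm_smul, Real.norm_eq_abs]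
      _ ≤ Real.sqrt St * Real.sqrt Sg := by
          have h1 : (∑ m : Fin M, |t m - tbar| * ‖g m - gbar‖) ^ 2 ≤
              (∑ m : Fin M, |t m - tbar| ^ 2) * ∑ m : Fin M, ‖g m - gbar‖ ^ 2 :=
            Finset.sum_mul_sq_le_sq_mul_sq _ _ _
          simp only [sq_abs] at h1
          rw [← Real.sqrt_mul_self (mul_nonneg (Real.sqrt_nonneg _) (Real.sqrt_nonneg _))]
          have hs : Real.sqrt St * Real.sqrt Sg * (Real.sqrt St * Real.sqrt Sg) = St * Sg := by
            rw [mul_mul_mul_comm, Real.mul_self_sqrt hStnn, Real.mul_self_sqrt hSgnn]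
          rw [hs, ← Real.sqrt_sq (Finset.sum_nonneg fun m _ =>
            mul_nonneg (abs_nonneg _) (norm_nonneg _))]
          exact Real.sqrt_le_sqrt h1
  have hLk : ‖L k‖ ≤ c * (ε * (Real.sqrt M * Real.sqrt St) + Real.sqrt St * Real.sqrt Sg) := by
    rw [key, norm_smul, Real.norm_eq_abs, abs_of_pos hcpos]
    exact mul_le_mul_of_nonneg_left
      (le_trans (norm_add_le _ _) (add_le_add hA hB)) hcpos.le
  refine hLk.trans ?_
  -- rewrite RHS
  have hσi' : σi = Real.sqrt c * Real.sqrt St := by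
    rw [hσi, Real.sqrt_mul hcpos.le]
  have hσg' : σg = Real.sqrt c * Real.sqrt Sg := by
    rw [hσg, Real.sqrt_mul hcpos.le]
  have hdiv : Real.sqrt ((M:ℝ) / ((M:ℝ) - 1)) = Real.sqrt M * Real.sqrt c := by
    rw [div_eq_mul_inv, Real.sqrt_mul (by positivity)]
  have hcc : Real.sqrt c * Real.sqrt c = c := Real.mul_self_sqrt hcpos.le
  rw [hσi', hσg', hdiv]
  have hsM : 0 ≤ Real.sqrt M := Real.sqrt_nonneg _
  have hsSt : 0 ≤ Real.sqrt St := Real.sqrt_nonneg _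
  have hsSg : 0 ≤ Real.sqrt Sg := Real.sqrt_nonneg _
  have hsc : 0 ≤ Real.sqrt c := Real.sqrt_nonneg _
  calc c * (ε * (Real.sqrt M * Real.sqrt St) + Real.sqrt St * Real.sqrt Sg)
      = ε * Real.sqrt M * c * Real.sqrt St + c * (Real.sqrt St * Real.sqrt Sg) := by ring
    _ ≤ 2 * ε * Real.sqrt M * c * Real.sqrt St + c * (Real.sqrt St * Real.sqrt Sg) := by
        have : 0 ≤ ε * Real.sqrt M * c * Real.sqrt St := by positivity
        linarith
    _ = (2 * ε * (Real.sqrt M * Real.sqrt c) + Real.sqrt c * Real.sqrt Sg) *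
        (Real.sqrt c * Real.sqrt St) := by
          linear_combination (-(2 * ε * Real.sqrt M * Real.sqrt St) -
            Real.sqrt Sg * Real.sqrt St) * hcc
end

section
/- (PhIK error bound.) Let $\mathcal{L}$ be a bounded linear operator on a normed function space and $Y^1,\dots,Y^M$ ($M\ge 2$) functions with $\|\mathcal{L} Y^m - g_m\| \le \epsilon$ for each $m$. Define $\mu_{MC}$, $k_{MC}$, $\bar g$, $\sigma_g$, $\sigma_i = \sigma(Y^m(x^{(i)}))$ as sample mean, sample covariance, mean of $g_m$, and sample standard deviations. Suppose the prediction has the form $\hat y = \mu_{MC} + \sum_{i=1}^N \tilde a_i\, k_{MC}(\cdot, x^{(i)})$ for scalars $\tilde a_i$. Then $\|\mathcal{L}\hat y - \bar g\| \le \epsilon + \big(2\epsilon\sqrt{M/(M-1)} + \sigma_g\big)\, \max_i |\tilde a_i| \sum_{i=1}^N \sigma_i$. -/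
open Finset

private lemma cs_sqrt {ι : Type*} (s : Finset ι) (f g : ι → ℝ)
    (hf : ∀ i ∈ s, 0 ≤ f i) (hg : ∀ i ∈ s, 0 ≤ g i) :
    ∑ i ∈ s, f i * g i ≤ Real.sqrt (∑ i ∈ s, f i ^ 2) * Real.sqrt (∑ i ∈ s, g i ^ 2) := by
  have h1 : (0:ℝ) ≤ ∑ i ∈ s, f i * g i :=
    sum_nonneg fun i hi => mul_nonneg (hf i hi) (hg i hi)
  calc ∑ i ∈ s, f i * g i = Real.sqrt ((∑ i ∈ s, f i * g i) ^ 2) := (Real.sqrt_sq h1).symm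
    _ ≤ Real.sqrt ((∑ i ∈ s, f i ^ 2) * ∑ i ∈ s, g i ^ 2) :=
        Real.sqrt_le_sqrt (sum_mul_sq_le_sq_mul_sq s f g)
    _ = _ := Real.sqrt_mul (sum_nonneg fun i _ => sq_nonneg _) _

/-- PhIK error bound: the prediction `ŷ = μ_MC + ∑ᵢ ãᵢ k_MC(·, x⁽ⁱ⁾)` satisfies
`‖L ŷ - ḡ‖ ≤ ε + (2ε√(M/(M-1)) + σ_g) maxᵢ|ãᵢ| ∑ᵢ σᵢ`, where `t i m` denotes the
point value `Yᵐ(x⁽ⁱ⁾)`. -/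
theorem phik_error_bound {V W : Type*}
    [NormedAddCommGroup V] [NormedSpace ℝ V]
    [NormedAddCommGroup W] [NormedSpace ℝ W]
    (L : V →L[ℝ] W) {M N : ℕ} (hM : 2 ≤ M) (hN : 0 < N)
    (Y : Fin M → V) (g : Fin M → W) (ε : ℝ)
    (h : ∀ m, ‖L (Y m) - g m‖ ≤ ε)
    (t : Fin N → Fin M → ℝ)
    (μ : V) (hμ : μ = (M : ℝ)⁻¹ • ∑ m, Y m)
    (gbar : W) (hgbar : gbar = (M : ℝ)⁻¹ • ∑ m, g m)
    (σg : ℝ) (hσg : σg = Real.sqrt (((M : ℝ) - 1)⁻¹ * ∑ m, ‖g m - gbar‖ ^ 2))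
    (σ : Fin N → ℝ)
    (hσ : ∀ i, σ i = Real.sqrt (((M : ℝ) - 1)⁻¹
        * ∑ m, (t i m - (M : ℝ)⁻¹ * ∑ m', t i m') ^ 2))
    (k : Fin N → V)
    (hk : ∀ i, k i = ((M : ℝ) - 1)⁻¹
        • ∑ m, (t i m - (M : ℝ)⁻¹ * ∑ m', t i m') • (Y m - μ))
    (a : Fin N → ℝ)
    (yhat : V) (hyhat : yhat = μ + ∑ i, a i • k i) :
    ‖L yhat - gbar‖
      ≤ ε + (2 * ε * Real.sqrt ((M : ℝ) / ((M : ℝ) - 1)) + σg)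
          * (⨆ i, |a i|) * ∑ i, σ i := by
  have hM2 : (2:ℝ) ≤ (M:ℝ) := by exact_mod_cast hM
  have hM0 : (0:ℝ) < (M:ℝ) := by linarith
  have hM1 : (0:ℝ) < (M:ℝ) - 1 := by linarith
  set c : Fin N → Fin M → ℝ := fun i m => t i m - (M : ℝ)⁻¹ * ∑ m', t i m' with hc
  have hcsum : ∀ i, ∑ m, c i m = 0 := by
    intro i
    simp only [hc, Finset.sum_sub_distrib, Finset.sum_const, card_univ, Fintype.card_fin,
      nsmul_eq_mul]
    field_simp
    ring
  have hεnn : 0 ≤ ε := le_trans (norm_nonneg _) (h ⟨0, by omega⟩)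
  have hσnn : ∀ i, 0 ≤ σ i := fun i => by rw [hσ i]; exact Real.sqrt_nonneg _
  have hσgnn : 0 ≤ σg := by rw [hσg]; exact Real.sqrt_nonneg _
  -- mean part
  have hstep1 : ‖L μ - gbar‖ ≤ ε := by
    have he : L μ - gbar = (M:ℝ)⁻¹ • ∑ m, (L (Y m) - g m) := by
      rw [hμ, hgbar, map_smul, map_sum, ← smul_sub, Finset.sum_sub_distrib]
    rw [he, norm_smul, Real.norm_eq_abs, abs_of_pos (by positivity)]
    calc (M:ℝ)⁻¹ * ‖∑ m, (L (Y m) - g m)‖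
        ≤ (M:ℝ)⁻¹ * ∑ m, ‖L (Y m) - g m‖ := by
          gcongr; exact norm_sum_le _ _
      _ ≤ (M:ℝ)⁻¹ * ∑ _m : Fin M, ε := by
          gcongr with m
          exact h m
      _ = ε := by
          rw [Finset.sum_const, card_univ, Fintype.card_fin, nsmul_eq_mul]
          field_simp
  -- sqrt facts
  have hsqc : ∀ i, Real.sqrt (∑ m, c i m ^ 2) = Real.sqrt ((M:ℝ) - 1) * σ i := by
    intro i
    rw [hσ i, ← Real.sqrt_mul hM1.le, ← mul_assoc, mul_inv_cancel₀ hM1.ne', one_mul]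
  have hsqg : Real.sqrt (∑ m, ‖g m - gbar‖ ^ 2) = Real.sqrt ((M:ℝ) - 1) * σg := by
    rw [hσg, ← Real.sqrt_mul hM1.le, ← mul_assoc, mul_inv_cancel₀ hM1.ne', one_mul]
  -- sum of |c|
  have habs : ∀ i, ∑ m, |c i m| ≤ Real.sqrt (M:ℝ) * (Real.sqrt ((M:ℝ) - 1) * σ i) := by
    intro i
    have := cs_sqrt (univ : Finset (Fin M)) (fun m => |c i m|) (fun _ => 1)
      (fun _ _ => abs_nonneg _) (fun _ _ => zero_le_one)
    simp only [mul_one, sq_abs, one_pow, Finset.sum_const, card_univ, Fintype.card_fin,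
      nsmul_eq_mul, mul_one, Real.sqrt_one] at this
    calc ∑ m, |c i m| ≤ Real.sqrt (∑ m, c i m ^ 2) * Real.sqrt (M:ℝ) := this
      _ = Real.sqrt (M:ℝ) * (Real.sqrt ((M:ℝ) - 1) * σ i) := by rw [hsqc i]; ring
  have habsg : ∀ i, ∑ m, |c i m| * ‖g m - gbar‖ ≤ ((M:ℝ) - 1) * (σ i * σg) := by
    intro i
    have := cs_sqrt (univ : Finset (Fin M)) (fun m => |c i m|) (fun m => ‖g m - gbar‖)
      (fun _ _ => abs_nonneg _) (fun _ _ => norm_nonneg _)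
    simp only [sq_abs] at this
    calc ∑ m, |c i m| * ‖g m - gbar‖
        ≤ Real.sqrt (∑ m, c i m ^ 2) * Real.sqrt (∑ m, ‖g m - gbar‖ ^ 2) := this
      _ = ((M:ℝ) - 1) * (σ i * σg) := by
          rw [hsqc i, hsqg]
          have hss : Real.sqrt ((M:ℝ) - 1) * Real.sqrt ((M:ℝ) - 1) = (M:ℝ) - 1 :=
            Real.mul_self_sqrt hM1.le
          linear_combination (σ i * σg) * hss
  -- rewrite L (k i)
  have hLk : ∀ i, L (k i) = ((M:ℝ) - 1)⁻¹ • ∑ m, c i m • (L (Y m) - gbar) := by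
    intro i
    rw [hk i, map_smul, map_sum]
    congr 1
    have e1 : ∀ (w : W), ∑ m, c i m • (L (Y m) - w) = ∑ m, c i m • L (Y m) := by
      intro w
      simp only [smul_sub, Finset.sum_sub_distrib, ← Finset.sum_smul, hcsum i, zero_smul,
        sub_zero]
    calc ∑ m, L (c i m • (Y m - μ)) = ∑ m, c i m • (L (Y m) - L μ) := by
          simp [map_smul, map_sub]
      _ = ∑ m, c i m • L (Y m) := e1 _
      _ = ∑ m, c i m • (L (Y m) - gbar) := (e1 _).symm
  -- bound on ‖L (k i)‖
  have hLkb : ∀ i, ‖L (k i)‖ ≤ (ε * Real.sqrt ((M:ℝ) / ((M:ℝ) - 1)) + σg) * σ i := by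
    intro i
    rw [hLk i, norm_smul, Real.norm_eq_abs, abs_of_pos (by positivity)]
    have key : ‖∑ m, c i m • (L (Y m) - gbar)‖
        ≤ ε * (Real.sqrt (M:ℝ) * (Real.sqrt ((M:ℝ) - 1) * σ i)) + ((M:ℝ) - 1) * (σ i * σg) := by
      calc ‖∑ m, c i m • (L (Y m) - gbar)‖
          ≤ ∑ m, ‖c i m • (L (Y m) - gbar)‖ := norm_sum_le _ _
        _ = ∑ m, |c i m| * ‖L (Y m) - gbar‖ := by
            simp [norm_smul, Real.norm_eq_abs]
        _ ≤ ∑ m, |c i m| * (ε + ‖g m - gbar‖) := by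
            apply Finset.sum_le_sum
            intro m _
            apply mul_le_mul_of_nonneg_left _ (abs_nonneg _)
            calc ‖L (Y m) - gbar‖ = ‖(L (Y m) - g m) + (g m - gbar)‖ := by abel_nf
              _ ≤ ‖L (Y m) - g m‖ + ‖g m - gbar‖ := norm_add_le _ _
              _ ≤ ε + ‖g m - gbar‖ := by gcongr; exact h m
        _ = ε * ∑ m, |c i m| + ∑ m, |c i m| * ‖g m - gbar‖ := by
            rw [Finset.mul_sum, ← Finset.sum_add_distrib]
            congr 1; ext m; ring
        _ ≤ ε * (Real.sqrt (M:ℝ) * (Real.sqrt ((M:ℝ) - 1) * σ i)) + ((M:ℝ) - 1) * (σ i * σg) := by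
            gcongr
            · exact habs i
            · exact habsg i
    calc ((M:ℝ) - 1)⁻¹ * ‖∑ m, c i m • (L (Y m) - gbar)‖
        ≤ ((M:ℝ) - 1)⁻¹ * (ε * (Real.sqrt (M:ℝ) * (Real.sqrt ((M:ℝ) - 1) * σ i))
            + ((M:ℝ) - 1) * (σ i * σg)) := by gcongr
      _ = (ε * Real.sqrt ((M:ℝ) / ((M:ℝ) - 1)) + σg) * σ i := by
          rw [Real.sqrt_div hM0.le]
          have hs : (0:ℝ) < Real.sqrt ((M:ℝ) - 1) := Real.sqrt_pos.mpr hM1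
          have hss : Real.sqrt ((M:ℝ) - 1) * Real.sqrt ((M:ℝ) - 1) = (M:ℝ) - 1 :=
            Real.mul_self_sqrt hM1.le
          field_simp
          linear_combination (ε * Real.sqrt (M:ℝ) * σ i) * hss
  -- sup facts
  haveI : Nonempty (Fin N) := ⟨⟨0, hN⟩⟩
  have hbdd : BddAbove (Set.range fun i => |a i|) := Set.Finite.bddAbove (Set.finite_range _)
  have hA : ∀ i, |a i| ≤ ⨆ i, |a i| := fun i => le_ciSup hbdd i
  have hAnn : 0 ≤ ⨆ i, |a i| := le_trans (abs_nonneg _) (hA ⟨0, hN⟩)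
  -- combine
  have hdecomp : L yhat - gbar = (L μ - gbar) + ∑ i, a i • L (k i) := by
    rw [hyhat]
    simp only [map_add, map_sum, map_smul]
    abel
  have hB' : ε * Real.sqrt ((M:ℝ) / ((M:ℝ) - 1)) + σg
      ≤ 2 * ε * Real.sqrt ((M:ℝ) / ((M:ℝ) - 1)) + σg := by
    nlinarith [Real.sqrt_nonneg ((M:ℝ) / ((M:ℝ) - 1)), hεnn]
  calc ‖L yhat - gbar‖ ≤ ‖L μ - gbar‖ + ‖∑ i, a i • L (k i)‖ := by
        rw [hdecomp]; exact norm_add_le _ _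
    _ ≤ ε + ∑ i, |a i| * ‖L (k i)‖ := by
        have h2 : ‖∑ i, a i • L (k i)‖ ≤ ∑ i, |a i| * ‖L (k i)‖ := by
          refine (norm_sum_le _ _).trans (le_of_eq ?_)
          simp [norm_smul, Real.norm_eq_abs]
        exact add_le_add hstep1 h2
    _ ≤ ε + ∑ i, (⨆ j, |a j|) * ((ε * Real.sqrt ((M:ℝ) / ((M:ℝ) - 1)) + σg) * σ i) := by
        refine add_le_add_right (Finset.sum_le_sum fun i _ => ?_) ε
        exact mul_le_mul (hA i) (hLkb i) (norm_nonneg _) hAnn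
    _ = ε + (ε * Real.sqrt ((M:ℝ) / ((M:ℝ) - 1)) + σg) * (⨆ i, |a i|) * ∑ i, σ i := by
        rw [← Finset.mul_sum, ← Finset.mul_sum]; ring
    _ ≤ ε + (2 * ε * Real.sqrt ((M:ℝ) / ((M:ℝ) - 1)) + σg) * (⨆ i, |a i|) * ∑ i, σ i := by
        refine add_le_add_right (mul_le_mul_of_nonneg_right
          (mul_le_mul_of_nonneg_right hB' hAnn)
          (Finset.sum_nonneg fun i _ => hσnn i)) ε
end

section
/- (MLMC-PhIK error bound, two levels.) Let $\mathcal{L}$ be a bounded linear operator on a normed function space. Let $\{Y_H^m\}_{m=1}^{M_H}$ and $\{Y_L^m\}_{m=1}^{M_L}$ (with $M_H, M_L \ge 2$) satisfy $\|\mathcal{L} Y_H^m - g_{H,m}\| \le \epsilon_H$ and $\|\mathcal{L} Y_L^m - g_{L,m}\| \le \epsilon_L$ for samples $g_{H,m}, g_{L,m}$ of a function family with mean $\bar g$ and sample spread $\sigma_g$. Define $\bar Y^m = Y_H^m - Y_L^m$, the MLMC mean $\mu_{MLMC} = \frac{1}{M_L}\sum_m Y_L^m + \frac{1}{M_H}\sum_m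 \bar Y^m$, and the MLMC covariance $k_{MLMC}(x,x')$ as the sum of the two sample covariances of $\{Y_L^m\}$ and $\{\bar Y^m\}$. Then for a prediction $\hat y = \mu_{MLMC} + \sum_{i=1}^N \tilde a_i k_{MLMC}(\cdot, x^{(i)})$ with nonnegative weights $\tilde a_i$, one has $\|\mathcal{L}\hat y - \bar g\| \le C_H \epsilon_H + C_L \epsilon_L + \sigma_g \sum_{i=1}^N \tilde a_i \sigma(Y_L^m(x^{(i)}))$, where $C_H = 1 + 2\sum_i \tilde a_i \sqrt{M_H/(M_H-1)}\,\sigma(\bar Y^m(x^{(i)}))$ and $C_L = 2 + 2\sum_i \tilde a_i (\sqrt{M_L/(M_L-1)}\,\sigma(Y_L^m(x^{(i)})) + \sqrt{M_H/(M_H-1)}\,\sigma(\bar Y^m(x^{(i)})))$. -/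
open Finset


lemma avg_norm_le {W : Type*} [NormedAddCommGroup W] [NormedSpace ℝ W]
    {M : ℕ} (hM : 0 < M) (v : Fin M → W) (ε : ℝ) (h : ∀ m, ‖v m‖ ≤ ε) :
    ‖(M:ℝ)⁻¹ • ∑ m, v m‖ ≤ ε := by
  rw [norm_smul, Real.norm_eq_abs, abs_inv, abs_of_nonneg (Nat.cast_nonneg M)]
  have h1 : ‖∑ m, v m‖ ≤ (M:ℝ) * ε := by
    calc ‖∑ m, v m‖ ≤ ∑ m, ‖v m‖ := norm_sum_le _ _
    _ ≤ ∑ _m : Fin M, ε := Finset.sum_le_sum (fun m _ => h m)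
    _ = (M:ℝ) * ε := by simp [Finset.sum_const, mul_comm]
  have hMpos : (0:ℝ) < (M:ℝ) := by exact_mod_cast hM
  calc (M:ℝ)⁻¹ * ‖∑ m, v m‖ ≤ (M:ℝ)⁻¹ * ((M:ℝ) * ε) := by
        gcongr
    _ = ε := by field_simp

lemma sum_abs_le_sqrt {M : ℕ} (c : Fin M → ℝ) :
    ∑ m, |c m| ≤ Real.sqrt M * Real.sqrt (∑ m, c m ^ 2) := by
  have := Real.sum_mul_le_sqrt_mul_sqrt (univ : Finset (Fin M)) (fun _ => (1:ℝ))
    (fun m => |c m|)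
  simpa [sq_abs] using this

lemma norm_sum_smul_le_sqrt {W : Type*} [NormedAddCommGroup W] [NormedSpace ℝ W]
    {M : ℕ} (c : Fin M → ℝ) (u : Fin M → W) :
    ‖∑ m, c m • u m‖ ≤ Real.sqrt (∑ m, c m ^ 2) * Real.sqrt (∑ m, ‖u m‖ ^ 2) := by
  calc ‖∑ m, c m • u m‖ ≤ ∑ m, ‖c m • u m‖ := norm_sum_le _ _
  _ = ∑ m, |c m| * ‖u m‖ := by simp [norm_smul]
  _ ≤ Real.sqrt (∑ m, |c m| ^ 2) * Real.sqrt (∑ m, ‖u m‖ ^ 2) :=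
      Real.sum_mul_le_sqrt_mul_sqrt _ _ _
  _ = _ := by simp [sq_abs]

lemma sum_smul_bound {W : Type*} [NormedAddCommGroup W] [NormedSpace ℝ W]
    {M : ℕ} (c : Fin M → ℝ) (u w : Fin M → W) (ε : ℝ)
    (h : ∀ m, ‖u m - w m‖ ≤ ε) :
    ‖∑ m, c m • u m‖ ≤ (∑ m, |c m|) * ε
      + Real.sqrt (∑ m, c m ^ 2) * Real.sqrt (∑ m, ‖w m‖ ^ 2) := by
  have hsplit : ∑ m, c m • u m = (∑ m, c m • (u m - w m)) + ∑ m, c m • w m := by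
    rw [← Finset.sum_add_distrib]
    exact Finset.sum_congr rfl fun m _ => by rw [← smul_add, sub_add_cancel]
  rw [hsplit]
  have h1 : ‖∑ m, c m • (u m - w m)‖ ≤ (∑ m, |c m|) * ε := by
    calc ‖∑ m, c m • (u m - w m)‖ ≤ ∑ m, ‖c m • (u m - w m)‖ := norm_sum_le _ _
    _ = ∑ m, |c m| * ‖u m - w m‖ := by simp [norm_smul]
    _ ≤ ∑ m, |c m| * ε := Finset.sum_le_sum fun m _ =>
        mul_le_mul_of_nonneg_left (h m) (abs_nonneg _)
    _ = (∑ m, |c m|) * ε := by rw [Finset.sum_mul]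
  exact le_trans (norm_add_le _ _) (add_le_add h1 (norm_sum_smul_le_sqrt c w))

lemma sum_smul_sub_const {W : Type*} [NormedAddCommGroup W] [NormedSpace ℝ W]
    {M : ℕ} (c : Fin M → ℝ) (hc : ∑ m, c m = 0) (u : Fin M → W) (x y : W) :
    ∑ m, c m • (u m - x) = ∑ m, c m • (u m - y) := by
  have key : ∀ z : W, ∑ m, c m • (u m - z) = ∑ m, c m • u m := by
    intro z
    have : ∑ m, c m • (u m - z) = (∑ m, c m • u m) - (∑ m, c m) • z := by
      rw [Finset.sum_smul, ← Finset.sum_sub_distrib]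
      exact Finset.sum_congr rfl fun m _ => smul_sub _ _ _
    rw [this, hc, zero_smul, sub_zero]
  rw [key, key]

set_option maxHeartbeats 1000000

/-- Two-level MLMC-PhIK error bound. Here `tL i m` and `tb i m` denote the point
values `Y_Lᵐ(x⁽ⁱ⁾)` and `Ȳᵐ(x⁽ⁱ⁾)` of the low-fidelity realizations and of the level
differences `Ȳᵐ = Y_Hᵐ - Y_L'ᵐ` (matched samples, so both members of a pair share the
constraint sample `gH m`). -/
theorem mlmc_phik_error_bound {V W : Type*}
    [NormedAddCommGroup V] [NormedSpace ℝ V]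
    [NormedAddCommGroup W] [NormedSpace ℝ W]
    (L : V →L[ℝ] W) {MH ML N : ℕ} (hMH : 2 ≤ MH) (hML : 2 ≤ ML)
    (YH YL' : Fin MH → V) (YL : Fin ML → V)
    (gH : Fin MH → W) (gL : Fin ML → W) (εH εL : ℝ)
    (hH : ∀ m, ‖L (YH m) - gH m‖ ≤ εH)
    (hL' : ∀ m, ‖L (YL' m) - gH m‖ ≤ εL)
    (hLlo : ∀ m, ‖L (YL m) - gL m‖ ≤ εL)
    (Yb : Fin MH → V) (hYb : ∀ m, Yb m = YH m - YL' m)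
    (gbar : W) (hgbar : gbar = (ML : ℝ)⁻¹ • ∑ m, gL m)
    (σg : ℝ) (hσg : σg = Real.sqrt (((ML : ℝ) - 1)⁻¹ * ∑ m, ‖gL m - gbar‖ ^ 2))
    (μL : V) (hμL : μL = (ML : ℝ)⁻¹ • ∑ m, YL m)
    (μb : V) (hμb : μb = (MH : ℝ)⁻¹ • ∑ m, Yb m)
    (tL : Fin N → Fin ML → ℝ) (tb : Fin N → Fin MH → ℝ)
    (σL σb : Fin N → ℝ)
    (hσL : ∀ i, σL i = Real.sqrt (((ML : ℝ) - 1)⁻¹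
        * ∑ m, (tL i m - (ML : ℝ)⁻¹ * ∑ m', tL i m') ^ 2))
    (hσb : ∀ i, σb i = Real.sqrt (((MH : ℝ) - 1)⁻¹
        * ∑ m, (tb i m - (MH : ℝ)⁻¹ * ∑ m', tb i m') ^ 2))
    (k : Fin N → V)
    (hk : ∀ i, k i
        = ((ML : ℝ) - 1)⁻¹
            • ∑ m, (tL i m - (ML : ℝ)⁻¹ * ∑ m', tL i m') • (YL m - μL)
          + ((MH : ℝ) - 1)⁻¹
            • ∑ m, (tb i m - (MH : ℝ)⁻¹ * ∑ m', tb i m') • (Yb m - μb))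
    (a : Fin N → ℝ) (ha : ∀ i, 0 ≤ a i)
    (yhat : V) (hyhat : yhat = (μL + μb) + ∑ i, a i • k i)
    (CH CL : ℝ)
    (hCH : CH = 1 + 2 * ∑ i, a i * (Real.sqrt ((MH : ℝ) / ((MH : ℝ) - 1)) * σb i))
    (hCL : CL = 2 + 2 * ∑ i, a i *
        (Real.sqrt ((ML : ℝ) / ((ML : ℝ) - 1)) * σL i
          + Real.sqrt ((MH : ℝ) / ((MH : ℝ) - 1)) * σb i)) :
    ‖L yhat - gbar‖ ≤ CH * εH + CL * εL + σg * ∑ i, a i * σL i := by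
  -- numeric basics
  have hMLpos : 0 < ML := by omega
  have hMHpos : 0 < MH := by omega
  have hML1 : (0:ℝ) < (ML:ℝ) - 1 := by
    have : (2:ℝ) ≤ (ML:ℝ) := by exact_mod_cast hML
    linarith
  have hMH1 : (0:ℝ) < (MH:ℝ) - 1 := by
    have : (2:ℝ) ≤ (MH:ℝ) := by exact_mod_cast hMH
    linarith
  have hεL : 0 ≤ εL := le_trans (norm_nonneg _) (hLlo ⟨0, hMLpos⟩)
  have hεH : 0 ≤ εH := le_trans (norm_nonneg _) (hH ⟨0, hMHpos⟩)
  set wL : ℝ := Real.sqrt ((ML : ℝ) / ((ML : ℝ) - 1)) with hwLdef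
  set wH : ℝ := Real.sqrt ((MH : ℝ) / ((MH : ℝ) - 1)) with hwHdef
  set sL : ℝ := Real.sqrt ((ML:ℝ) - 1) with hsLdef
  set sH : ℝ := Real.sqrt ((MH:ℝ) - 1) with hsHdef
  have hsL2 : sL * sL = (ML:ℝ) - 1 := Real.mul_self_sqrt hML1.le
  have hsH2 : sH * sH = (MH:ℝ) - 1 := Real.mul_self_sqrt hMH1.le
  have hwL0 : 0 ≤ wL := Real.sqrt_nonneg _
  have hwH0 : 0 ≤ wH := Real.sqrt_nonneg _
  have hrtL : Real.sqrt (ML:ℝ) = wL * sL := by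
    rw [hwLdef, hsLdef, ← Real.sqrt_mul (by positivity)]
    congr 1
    field_simp
  have hrtH : Real.sqrt (MH:ℝ) = wH * sH := by
    rw [hwHdef, hsHdef, ← Real.sqrt_mul (by positivity)]
    congr 1
    field_simp
  have hσg0 : 0 ≤ σg := hσg ▸ Real.sqrt_nonneg _
  have hσL0 : ∀ i, 0 ≤ σL i := fun i => (hσL i) ▸ Real.sqrt_nonneg _
  have hσb0 : ∀ i, 0 ≤ σb i := fun i => (hσb i) ▸ Real.sqrt_nonneg _
  -- mean bounds
  have t1 : ‖L μL - gbar‖ ≤ εL := by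
    have : L μL - gbar = (ML:ℝ)⁻¹ • ∑ m, (L (YL m) - gL m) := by
      rw [hμL, hgbar, map_smul, map_sum, ← smul_sub, ← Finset.sum_sub_distrib]
    rw [this]
    exact avg_norm_le hMLpos _ εL hLlo
  have t2 : ‖L μb‖ ≤ εH + εL := by
    have : L μb = (MH:ℝ)⁻¹ • ∑ m, L (Yb m) := by rw [hμb, map_smul, map_sum]
    rw [this]
    refine avg_norm_le hMHpos _ _ (fun m => ?_)
    have : L (Yb m) = (L (YH m) - gH m) - (L (YL' m) - gH m) := by
      rw [hYb m, map_sub]; abel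
    rw [this]
    exact le_trans (norm_sub_le _ _) (add_le_add (hH m) (hL' m))
  -- per-i bound
  have t3 : ∀ i, ‖L (k i)‖ ≤ wL * σL i * εL + σg * σL i + wH * σb i * (εH + εL) := by
    intro i
    set cL : Fin ML → ℝ := fun m => tL i m - (ML:ℝ)⁻¹ * ∑ m', tL i m' with hcLdef
    set cb : Fin MH → ℝ := fun m => tb i m - (MH:ℝ)⁻¹ * ∑ m', tb i m' with hcbdef
    have hcL0 : ∑ m, cL m = 0 := by
      simp only [hcLdef, Finset.sum_sub_distrib, Finset.sum_const, card_univ,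
        Fintype.card_fin, nsmul_eq_mul]
      have : (ML:ℝ) ≠ 0 := by positivity
      field_simp
      ring
    have hcb0 : ∑ m, cb m = 0 := by
      simp only [hcbdef, Finset.sum_sub_distrib, Finset.sum_const, card_univ,
        Fintype.card_fin, nsmul_eq_mul]
      have : (MH:ℝ) ≠ 0 := by positivity
      field_simp
      ring
    -- sqrt identities
    have e1 : Real.sqrt (∑ m, cL m ^ 2) = sL * σL i := by
      rw [hσL i, hsLdef, ← Real.sqrt_mul hML1.le, ← mul_assoc,
        mul_inv_cancel₀ (ne_of_gt hML1), one_mul]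
    have e2 : Real.sqrt (∑ m, ‖gL m - gbar‖ ^ 2) = sL * σg := by
      rw [hσg, hsLdef, ← Real.sqrt_mul hML1.le, ← mul_assoc,
        mul_inv_cancel₀ (ne_of_gt hML1), one_mul]
    have e3 : Real.sqrt (∑ m, cb m ^ 2) = sH * σb i := by
      rw [hσb i, hsHdef, ← Real.sqrt_mul hMH1.le, ← mul_assoc,
        mul_inv_cancel₀ (ne_of_gt hMH1), one_mul]
    -- low part
    have lowEq : ∑ m, cL m • L (YL m - μL) = ∑ m, cL m • (L (YL m) - gbar) := by
      have : ∀ m, cL m • L (YL m - μL) = cL m • (L (YL m) - L μL) := by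
        intro m; rw [map_sub]
      simp only [this]
      exact sum_smul_sub_const cL hcL0 _ _ _
    have lowBound : ‖∑ m, cL m • L (YL m - μL)‖
        ≤ (Real.sqrt ML * (sL * σL i)) * εL + (sL * σL i) * (sL * σg) := by
      rw [lowEq]
      have hb := sum_smul_bound cL (fun m => L (YL m) - gbar) (fun m => gL m - gbar) εL
        (fun m => by simpa using hLlo m)
      refine le_trans hb ?_
      rw [e1, e2]
      gcongr
      calc ∑ m, |cL m| ≤ Real.sqrt ML * Real.sqrt (∑ m, cL m ^ 2) := sum_abs_le_sqrt cL
        _ = Real.sqrt ML * (sL * σL i) := by rw [e1]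
    -- bar part
    have barEq : ∑ m, cb m • L (Yb m - μb) = ∑ m, cb m • (L (Yb m) - 0) := by
      have : ∀ m, cb m • L (Yb m - μb) = cb m • (L (Yb m) - L μb) := by
        intro m; rw [map_sub]
      simp only [this]
      exact sum_smul_sub_const cb hcb0 _ _ _
    have barBound : ‖∑ m, cb m • L (Yb m - μb)‖
        ≤ (Real.sqrt MH * (sH * σb i)) * (εH + εL) := by
      rw [barEq]
      have hb := sum_smul_bound cb (fun m => L (Yb m) - 0) (fun _ => (0:W)) (εH + εL)
        (fun m => by
          simp only [sub_zero]
          have : L (Yb m) = (L (YH m) - gH m) - (L (YL' m) - gH m) := by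
            rw [hYb m, map_sub]; abel
          rw [this]
          exact le_trans (norm_sub_le _ _) (add_le_add (hH m) (hL' m)))
      simp only [norm_zero, ne_eq, OfNat.ofNat_ne_zero, not_false_eq_true, zero_pow,
        Finset.sum_const, smul_zero, Real.sqrt_zero, mul_zero, add_zero] at hb
      refine le_trans hb ?_
      have h2 : ∑ m, |cb m| ≤ Real.sqrt MH * (sH * σb i) := by
        calc ∑ m, |cb m| ≤ Real.sqrt MH * Real.sqrt (∑ m, cb m ^ 2) := sum_abs_le_sqrt cb
          _ = _ := by rw [e3]
      exact mul_le_mul_of_nonneg_right h2 (by linarith)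
    -- combine
    have hkL : L (k i) = ((ML:ℝ) - 1)⁻¹ • (∑ m, cL m • L (YL m - μL))
        + ((MH:ℝ) - 1)⁻¹ • (∑ m, cb m • L (Yb m - μb)) := by
      rw [hk i, map_add, map_smul, map_smul, map_sum, map_sum]
      simp only [map_smul]
      rfl
    rw [hkL]
    have hnorm : ‖((ML:ℝ) - 1)⁻¹ • (∑ m, cL m • L (YL m - μL))
        + ((MH:ℝ) - 1)⁻¹ • (∑ m, cb m • L (Yb m - μb))‖
        ≤ ((ML:ℝ) - 1)⁻¹ * ‖∑ m, cL m • L (YL m - μL)‖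
          + ((MH:ℝ) - 1)⁻¹ * ‖∑ m, cb m • L (Yb m - μb)‖ := by
      refine le_trans (norm_add_le _ _) ?_
      rw [norm_smul, norm_smul, Real.norm_eq_abs, Real.norm_eq_abs,
        abs_of_pos (by positivity : (0:ℝ) < ((ML:ℝ)-1)⁻¹),
        abs_of_pos (by positivity : (0:ℝ) < ((MH:ℝ)-1)⁻¹)]
    refine le_trans hnorm ?_
    have step : ((ML:ℝ) - 1)⁻¹ * ((Real.sqrt ML * (sL * σL i)) * εL + (sL * σL i) * (sL * σg))
        + ((MH:ℝ) - 1)⁻¹ * ((Real.sqrt MH * (sH * σb i)) * (εH + εL))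
        = wL * σL i * εL + σg * σL i + wH * σb i * (εH + εL) := by
      rw [hrtL, hrtH]
      have i1 : ((ML:ℝ) - 1)⁻¹ * (sL * sL) = 1 := by rw [hsL2]; field_simp
      have i2 : ((MH:ℝ) - 1)⁻¹ * (sH * sH) = 1 := by rw [hsH2]; field_simp
      calc ((ML:ℝ) - 1)⁻¹ * ((wL * sL * (sL * σL i)) * εL + (sL * σL i) * (sL * σg))
            + ((MH:ℝ) - 1)⁻¹ * ((wH * sH * (sH * σb i)) * (εH + εL))
          = (((ML:ℝ) - 1)⁻¹ * (sL * sL)) * (wL * σL i * εL + σg * σL i)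
            + (((MH:ℝ) - 1)⁻¹ * (sH * sH)) * (wH * σb i * (εH + εL)) := by ring
        _ = _ := by rw [i1, i2]; ring
    rw [← step]
    exact add_le_add
      (mul_le_mul_of_nonneg_left lowBound (by positivity))
      (mul_le_mul_of_nonneg_left barBound (by positivity))
  -- assemble
  have hsplit : L yhat - gbar = (L μL - gbar) + L μb + ∑ i, a i • L (k i) := by
    rw [hyhat, map_add, map_add, map_sum]
    simp only [map_smul]
    abel
  rw [hsplit]
  have hbig : ‖(L μL - gbar) + L μb + ∑ i, a i • L (k i)‖
      ≤ εL + (εH + εL) + ∑ i, a i * (wL * σL i * εL + σg * σL i + wH * σb i * (εH + εL)) := by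
    refine le_trans (norm_add_le _ _) ?_
    refine add_le_add (le_trans (norm_add_le _ _) (add_le_add t1 t2)) ?_
    calc ‖∑ i, a i • L (k i)‖ ≤ ∑ i, ‖a i • L (k i)‖ := norm_sum_le _ _
      _ = ∑ i, a i * ‖L (k i)‖ := by
          refine Finset.sum_congr rfl fun i _ => ?_
          rw [norm_smul, Real.norm_eq_abs, abs_of_nonneg (ha i)]
      _ ≤ _ := Finset.sum_le_sum fun i _ =>
          mul_le_mul_of_nonneg_left (t3 i) (ha i)
  refine le_trans hbig ?_
  set AL : ℝ := ∑ i, a i * σL i with hALdef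
  set Ab : ℝ := ∑ i, a i * σb i with hAbdef
  have hAL0 : 0 ≤ AL := Finset.sum_nonneg fun i _ => mul_nonneg (ha i) (hσL0 i)
  have hAb0 : 0 ≤ Ab := Finset.sum_nonneg fun i _ => mul_nonneg (ha i) (hσb0 i)
  have hsum : ∑ i, a i * (wL * σL i * εL + σg * σL i + wH * σb i * (εH + εL))
      = (wL * εL + σg) * AL + (wH * (εH + εL)) * Ab := by
    rw [hALdef, hAbdef, Finset.mul_sum, Finset.mul_sum, ← Finset.sum_add_distrib]
    exact Finset.sum_congr rfl fun i _ => by ring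
  rw [hsum]
  have hb1 : ∑ i, a i * (wH * σb i) = wH * Ab := by
    rw [hAbdef, Finset.mul_sum]
    exact Finset.sum_congr rfl fun i _ => by ring
  have hb2 : ∑ i, a i * (wL * σL i + wH * σb i) = wL * AL + wH * Ab := by
    rw [hALdef, hAbdef, Finset.mul_sum, Finset.mul_sum, ← Finset.sum_add_distrib]
    exact Finset.sum_congr rfl fun i _ => by ring
  have hCH' : CH = 1 + 2 * (wH * Ab) := by rw [hCH, hb1]
  have hCL' : CL = 2 + 2 * (wL * AL + wH * Ab) := by rw [hCL, hb2]
  rw [hCH', hCL']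
  nlinarith [mul_nonneg (mul_nonneg hwH0 hAb0) hεH, mul_nonneg (mul_nonneg hwL0 hAL0) hεL,
    mul_nonneg (mul_nonneg hwH0 hAb0) hεL]
end

section
/- Let $\mathcal{L}$ be a linear operator and let $g$ be a fixed function. Suppose $\mathcal{L} Y_l^m = g$ for all realizations $Y_l^m$, $m = 1,\dots,M_l$, at every level $l = 1,\dots,L$ (each $M_l \ge 2$). Define level differences $\bar Y_1^m = Y_1^m$ and $\bar Y_l^m = Y_l^m - Y_{l-1}^m$ for $l \ge 2$, the MLMC mean $\mu_{MLMC} = \sum_{l=1}^L \frac{1}{M_l}\sum_m \bar Y_l^m$, and the MLMC covariance $k_{MLMC}$ as the sum over levels of sample covariances of $\{\bar Y_l^m\}$. Then any prediction $\hat y = \mu_{MLMC} + \sum_{i=1}^N \tilde a_i k_{MLMC}(\cdot, x^{(i)})$ satisfies $\mathcal{L}\hat y = g$ exactly. -/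
open Finset

/-- Exact constraint preservation for `L`-level MLMC-PhIK: if every realization at
every level satisfies `T Y = g` exactly, then the MLMC-based PhIK prediction
satisfies `T ŷ = g` exactly. Here `Yb l m` are the level differences (`Y₁ᵐ` at the
first level, `Y_lᵐ - Y_{l-1}ᵐ` for higher levels, with matched samples), and
`t l i m` are the point values used in the sample covariances. -/
theorem mlmc_exact_constraint_preservation {V W : Type*}
    [AddCommGroup V] [Module ℝ V] [AddCommGroup W] [Module ℝ W]
    (T : V →ₗ[ℝ] W) {L N : ℕ} (hL : 0 < L)
    (M : Fin L → ℕ) (hM : ∀ l, 2 ≤ M l)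
    (Yhi Ylo : (l : Fin L) → Fin (M l) → V)
    (g : W)
    (hhi : ∀ l m, T (Yhi l m) = g)
    (hlo : ∀ l m, T (Ylo l m) = g)
    (Yb : (l : Fin L) → Fin (M l) → V)
    (hYb : ∀ l m, Yb l m = if (l : ℕ) = 0 then Yhi l m else Yhi l m - Ylo l m)
    (μlev : Fin L → V)
    (hμ : ∀ l, μlev l = ((M l : ℝ))⁻¹ • ∑ m, Yb l m)
    (t : (l : Fin L) → Fin N → Fin (M l) → ℝ)
    (a : Fin N → ℝ)
    (k : Fin N → V)
    (hk : ∀ i, k i = ∑ l, ((M l : ℝ) - 1)⁻¹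
        • ∑ m, (t l i m - (M l : ℝ)⁻¹ * ∑ m', t l i m') • (Yb l m - μlev l)) :
    T (∑ l, μlev l + ∑ i, a i • k i) = g := by
  have hMne : ∀ l, (M l : ℝ) ≠ 0 := fun l => by
    have := hM l; positivity
  have hTYb : ∀ l m, T (Yb l m) = if (l : ℕ) = 0 then g else 0 := by
    intro l m
    rw [hYb]
    by_cases h : (l : ℕ) = 0 <;> simp [h, map_sub, hhi, hlo]
  have hTμ : ∀ l, T (μlev l) = if (l : ℕ) = 0 then g else 0 := by
    intro l
    rw [hμ, map_smul, map_sum]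
    simp only [hTYb]
    rw [Finset.sum_const, Finset.card_univ, Fintype.card_fin]
    by_cases h : (l : ℕ) = 0 <;>
      simp [h, ← Nat.cast_smul_eq_nsmul ℝ, smul_smul, inv_mul_cancel₀ (hMne l)]
  have hTdiff : ∀ l m, T (Yb l m - μlev l) = 0 := by
    intro l m
    rw [map_sub, hTYb, hTμ, sub_self]
  have hTk : ∀ i, T (k i) = 0 := by
    intro i
    rw [hk, map_sum]
    refine Finset.sum_eq_zero fun l _ => ?_
    rw [map_smul, map_sum]
    rw [Finset.sum_eq_zero (fun m _ => by rw [map_smul, hTdiff, smul_zero]),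
      smul_zero]
  rw [map_add, map_sum, map_sum]
  have h2 : ∑ i, T (a i • k i) = 0 := by
    refine Finset.sum_eq_zero fun i _ => ?_
    rw [map_smul, hTk, smul_zero]
  rw [h2, add_zero]
  simp only [hTμ]
  rw [Finset.sum_eq_single (⟨0, hL⟩ : Fin L)]
  · simp
  · intro b _ hb
    have : (b : ℕ) ≠ 0 := fun h => hb (Fin.ext h)
    simp [this]
  · simp
end

section
/- Let $K \in \mathbb{R}^{Q\times Q}$ be symmetric positive definite, and let $i_1,\dots,i_N$ be observation indices with submatrix $C$ ($C_{mn} = K_{i_m i_n}$) invertible. If the span of the observed columns $\{K_{(1)},\dots,K_{(N)}\}$ (where $K_{(n)}$ is column $i_n$ of $K$) equals the span of the eigenvectors of $K$ corresponding to its $N$ largest eigenvalues $\lambda_1 \ge \cdots \ge \lambda_N$, then $\sum_{j=1}^Q (K_{jj} - c_j^T C^{-1} c_j) = \sum_{i=N+1}^Q \lambda_i$, i.e., the learning-curve lower bound is attained. -/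
open Matrix Finset

/-- Equality case of the learning-curve bound: if the observed columns of `K` span the
same subspace as the eigenvectors of the `N` largest eigenvalues, then the total
predictive variance equals the sum of the `Q - N` smallest eigenvalues. -/
theorem learning_curve_equality {Q N : ℕ} (hNQ : N ≤ Q)
    (K : Matrix (Fin Q) (Fin Q) ℝ) (hK : K.PosDef)
    (V : Matrix (Fin Q) (Fin Q) ℝ) (hV : Vᵀ * V = 1)
    (lam : Fin Q → ℝ) (hlam_pos : ∀ i, 0 < lam i)
    (hlam_mono : ∀ i j : Fin Q, i ≤ j → lam j ≤ lam i)
    (hdecomp : K = V * Matrix.diagonal lam * Vᵀ)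
    (idx : Fin N → Fin Q)
    (C : Matrix (Fin N) (Fin N) ℝ)
    (hC : C = Matrix.of fun m n => K (idx m) (idx n))
    (hCinv : IsUnit C.det)
    (c : Fin Q → Fin N → ℝ) (hc : ∀ j m, c j m = K (idx m) j)
    (hspan : Submodule.span ℝ (Set.range fun n : Fin N => (fun q => K q (idx n)))
        = Submodule.span ℝ
            (Set.range fun n : Fin N => (fun q => V q (Fin.castLE hNQ n)))) :
    ∑ j : Fin Q, (K j j - c j ⬝ᵥ C⁻¹ *ᵥ c j)
      = ∑ i ∈ Finset.univ.filter (fun i : Fin Q => N ≤ (i : ℕ)), lam i := by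
  classical
  set cl : Fin N → Fin Q := Fin.castLE hNQ with hcl
  -- K is symmetric
  have hKsym : ∀ a b, K b a = K a b := by
    intro a b
    have : Kᵀ = K := by
      rw [hdecomp]
      simp [Matrix.transpose_mul, Matrix.mul_assoc]
    exact congrFun (congrFun this a) b
  -- The matrix of observed columns
  set B : Matrix (Fin Q) (Fin N) ℝ := Matrix.of (fun q n => K q (idx n)) with hBdef
  set W : Matrix (Fin Q) (Fin N) ℝ := Matrix.of (fun q n => V q (cl n)) with hWdef
  -- factor B = W * M using the span hypothesis
  have hmem : ∀ n : Fin N, (fun q => K q (idx n)) ∈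
      Submodule.span ℝ (Set.range fun n : Fin N => (fun q => V q (cl n))) := by
    intro n
    rw [← hspan]
    exact Submodule.subset_span ⟨n, rfl⟩
  choose coeff hcoeff using fun n => (Submodule.mem_span_range_iff_exists_fun ℝ).mp (hmem n)
  set M : Matrix (Fin N) (Fin N) ℝ := Matrix.of (fun m n => coeff n m) with hMdef
  have hB : B = W * M := by
    ext q n
    have h := congrFun (hcoeff n) q
    simp only [Finset.sum_apply, Pi.smul_apply, smul_eq_mul] at h
    simp only [hBdef, hWdef, hMdef, Matrix.mul_apply, Matrix.of_apply]
    rw [← h]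
    exact Finset.sum_congr rfl fun m _ => mul_comm _ _
  -- orthonormality of the eigenvector columns
  have hVentry : ∀ a b, ∑ q, V q a * V q b = if a = b then (1:ℝ) else 0 := by
    intro a b
    have h := congrFun (congrFun hV a) b
    simpa [Matrix.mul_apply, Matrix.one_apply] using h
  -- the "embedding" matrix E
  set E : Matrix (Fin Q) (Fin N) ℝ := Matrix.of (fun i n => if i = cl n then (1:ℝ) else 0)
    with hEdef
  have hVtW : Vᵀ * W = E := by
    ext i n
    simp only [Matrix.mul_apply, Matrix.transpose_apply, hWdef, hEdef, Matrix.of_apply]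
    exact hVentry i (cl n)
  have hVE : V * E = W := by
    ext q n
    simp [hEdef, hWdef, Matrix.mul_apply]
  have hDE : Matrix.diagonal lam * E = E * Matrix.diagonal (fun n => lam (cl n)) := by
    ext i n
    simp only [Matrix.mul_apply, Matrix.diagonal_apply, hEdef, Matrix.of_apply]
    rw [Finset.sum_eq_single i, Finset.sum_eq_single n] <;>
      aesop
  set Lam : Matrix (Fin N) (Fin N) ℝ := Matrix.diagonal (fun n => lam (cl n)) with hLam
  -- K * W = W * Lam
  have hKW : K * W = W * Lam := by
    rw [hdecomp, Matrix.mul_assoc, hVtW, Matrix.mul_assoc, hDE, ← Matrix.mul_assoc, hVE]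
  -- submatrices
  set Wp : Matrix (Fin N) (Fin N) ℝ := W.submatrix idx id with hWp
  have hCB : C = Wp * M := by
    have h1 : C = B.submatrix idx id := by
      rw [hC, hBdef]; rfl
    rw [h1, hB, Matrix.submatrix_mul W M idx id id Function.bijective_id]
    rfl
  have hdetWp : IsUnit Wp.det := by
    rw [hCB, Matrix.det_mul] at hCinv
    exact isUnit_of_mul_isUnit_left hCinv
  have hdetM : IsUnit M.det := by
    rw [hCB, Matrix.det_mul] at hCinv
    exact isUnit_of_mul_isUnit_right hCinv
  -- BᵀB = Wp * Lam * M
  have hKB : K * B = W * Lam * M := by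
    rw [hB, ← Matrix.mul_assoc, hKW]
  have hBtB : Bᵀ * B = Wp * (Lam * M) := by
    have h1 : Bᵀ * B = (K * B).submatrix idx id := by
      ext m n
      simp only [Matrix.mul_apply, Matrix.transpose_apply, Matrix.submatrix_apply, id_eq,
        hBdef, Matrix.of_apply]
      exact Finset.sum_congr rfl fun q _ => by rw [hKsym q (idx m)]
    rw [h1, hKB, Matrix.mul_assoc, Matrix.submatrix_mul W (Lam * M) idx id id
      Function.bijective_id]
    rfl
  -- the predictive-variance sum as a trace
  have hsum : ∑ j : Fin Q, c j ⬝ᵥ C⁻¹ *ᵥ c j = Matrix.trace (C⁻¹ * (Bᵀ * B)) := by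
    simp only [Matrix.trace, Matrix.diag, Matrix.mul_apply, dotProduct, Matrix.mulVec,
      Matrix.transpose_apply, hBdef, Matrix.of_apply, hc, Finset.mul_sum, Finset.sum_mul]
    rw [Finset.sum_comm]
    refine Finset.sum_congr rfl fun m _ => ?_
    rw [Finset.sum_comm]
    refine Finset.sum_congr rfl fun n _ => ?_
    refine Finset.sum_congr rfl fun j _ => ?_
    rw [hKsym (idx n) j, hKsym (idx m) j]
    ring
  -- trace computation
  have htrace : Matrix.trace (C⁻¹ * (Bᵀ * B)) = ∑ n : Fin N, lam (cl n) := by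
    rw [hBtB, hCB, Matrix.mul_inv_rev]
    have h2 : M⁻¹ * Wp⁻¹ * (Wp * (Lam * M)) = M⁻¹ * (Lam * M) := by
      rw [← Matrix.mul_assoc (M⁻¹ * Wp⁻¹), Matrix.mul_assoc M⁻¹ Wp⁻¹ Wp,
        Matrix.nonsing_inv_mul Wp hdetWp, Matrix.mul_one]
    rw [h2, Matrix.trace_mul_comm, Matrix.mul_assoc, Matrix.mul_nonsing_inv M hdetM,
      Matrix.mul_one, hLam, Matrix.trace_diagonal]
  -- trace of K
  have htrK : ∑ j : Fin Q, K j j = ∑ i : Fin Q, lam i := by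
    have : Matrix.trace K = Matrix.trace (Matrix.diagonal lam) := by
      rw [hdecomp, Matrix.trace_mul_comm, ← Matrix.mul_assoc, hV, Matrix.one_mul]
    simpa [Matrix.trace, Matrix.diag, Matrix.trace_diagonal] using this
  -- index bookkeeping
  have himage : Finset.univ.filter (fun i : Fin Q => (i : ℕ) < N)
      = Finset.univ.image cl := by
    ext i
    simp only [Finset.mem_filter, Finset.mem_univ, true_and, Finset.mem_image]
    constructor
    · intro h
      exact ⟨⟨i.1, h⟩, by ext; rfl⟩
    · rintro ⟨n, rfl⟩
      exact n.2
  have hsmall : ∑ n : Fin N, lam (cl n)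
      = ∑ i ∈ Finset.univ.filter (fun i : Fin Q => (i : ℕ) < N), lam i := by
    rw [himage, Finset.sum_image]
    intro a _ b _ hab
    exact Fin.castLE_injective hNQ hab
  have hsplit := Finset.sum_filter_add_sum_filter_not Finset.univ
    (fun i : Fin Q => (i : ℕ) < N) lam
  have hfilter : Finset.univ.filter (fun i : Fin Q => ¬ (i : ℕ) < N)
      = Finset.univ.filter (fun i : Fin Q => N ≤ (i : ℕ)) := by
    simp [not_lt]
  rw [Finset.sum_sub_distrib, htrK, hsum, htrace, hsmall, ← hfilter]
  linarith [hsplit]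
end
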